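/- The group of group-like elements of the dual Hopf algebra 𝒜̄_q(n)* is {κ(α) : α ∈ Λ_+, 0 ≤ α_i ≤ ℓ-1}, where κ(α)(x^γ K(β)) = δ_{γ,0} q^{⟨α,β⟩}, and this group is isomorphic to (ℤ/ℓℤ)^n. -/

import Mathlib

/-!
A character `χ` kills every `x_i`: it is invertible on `K(ε_i)`, and `K(ε_i) x_i = q x_i K(ε_i)`
with `q ≠ 1`. It sends `K(ε_i)` to an `ℓ`-th root of unity `q^{α_i}`, so `χ = κ(α)` on the
basis, and `α` is read off from the values `χ(K(ε_i))`.

Conversely, define `κ(α)` linearly on the basis. Since the `x_i` `q`-commute with each other,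
a monomial `x^γ` with `γ_j ≠ 0` is, up to a unit, `x_j x^{γ - ε_j}`, and `κ(α)` kills every
product `x_j a`. The `K(β)` `q`-commute with the `x`'s, so multiplicativity reduces to
`K(β) K(β') = K((β + β') mod ℓ)`. This holds because `K(ε_i)^ℓ = 1`, and it matches
`q^ℓ = 1` on the scalar side.
-/

open scoped TensorProduct

def starForm {n : ℕ} (α β : Fin n → ℤ) : ℤ :=
  ∑ j : Fin n, ∑ i : Fin n, if (j : ℕ) < (i : ℕ) then α i * β j else 0

noncomputable def theta {k : Type*} [Field k] (q : k) {n : ℕ} (α β : Fin n → ℤ) : k :=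
  q ^ (starForm α β - starForm β α)

def epsZ {n : ℕ} (i : Fin n) : Fin n → ℤ := fun j => if j = i then 1 else 0

/-- The ordered monomial `x^γ = x_1^{γ_1} ⋯ x_n^{γ_n}` built from a family `x`. -/
def xpow {A : Type*} [Ring A] {n : ℕ} (x : Fin n → A) (γ : Fin n → ℕ) : A :=
  ((List.finRange n).map (fun i => x i ^ γ i)).prod

/-- A presentation of the `n`-rank Taft algebra inside a Hopf algebra `A`
(generators `K(α)`, `x_i` and the defining relations, together with the values of
the comultiplication, counit and antipode on the generators).  The scalar `t`
is the parameter used in the skew bicharacter `θ`: for the `n`-rank Taft algebra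
`𝒜̄_q(n)` one takes `t = q`, while `t = 1` gives the presentation of the `n`-fold
tensor power of the Taft algebra (the rank-`n` Taft algebra `𝒜̄_q(1)^{⊗n}`). -/
structure TaftPresentation (k : Type*) [Field k] (A : Type*) [Ring A]
    [HopfAlgebra k A] (n ℓ : ℕ) (q t : k) where
  K : (Fin n → ℤ) → A
  x : Fin n → A
  K_zero : K 0 = 1
  K_add : ∀ α β, K α * K β = K (α + β)
  K_ell : ∀ i, K (epsZ i) ^ ℓ = 1
  K_x : ∀ i j, K (epsZ i) * x j
      = (theta t (epsZ i) (epsZ j) * if i = j then q else 1) • (x j * K (epsZ i))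
  x_x : ∀ i j, x i * x j = theta t (epsZ i) (epsZ j) • (x j * x i)
  x_ell : ∀ i, x i ^ ℓ = 0
  comul_K : ∀ α, Coalgebra.comul (R := k) (K α) = K α ⊗ₜ[k] K α
  comul_x : ∀ i, Coalgebra.comul (R := k) (x i) = x i ⊗ₜ[k] 1 + K (epsZ i) ⊗ₜ[k] x i
  counit_K : ∀ α, Coalgebra.counit (R := k) (K α) = 1
  counit_x : ∀ i, Coalgebra.counit (R := k) (x i) = 0
  antipode_K : ∀ α, HopfAlgebra.antipode (R := k) (K α) = K (-α)
  antipode_x : ∀ i, HopfAlgebra.antipode (R := k) (x i) = -(K (-epsZ i) * x i)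

namespace TaftPresentation

variable {k : Type*} [Field k] {A : Type*} [Ring A] [HopfAlgebra k A]
  {n ℓ : ℕ} {q t : k}

/-- The basis monomial `x^γ K(α)`. -/
def mono (T : TaftPresentation k A n ℓ q t) (γ α : Fin n → Fin ℓ) : A :=
  xpow T.x (fun i => (γ i : ℕ)) * T.K (fun i => (α i : ℤ))

end TaftPresentation

def SkewCommute (R : Type*) {A : Type*} [CommSemiring R] [Semiring A] [Algebra R A]
    (a b : A) : Prop :=
  ∃ u : Rˣ, a * b = u • (b * a)

namespace SkewCommute

variable {R A : Type*} [CommSemiring R] [Semiring A] [Algebra R A] {a b c : A}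

theorem symm (h : SkewCommute R a b) : SkewCommute R b a := by
  obtain ⟨u, hu⟩ := h
  exact ⟨u⁻¹, eq_inv_smul_iff.mpr hu.symm⟩

theorem one_right (a : A) : SkewCommute R a 1 := ⟨1, by simp⟩

theorem one_left (a : A) : SkewCommute R 1 a := (one_right a).symm

theorem mul_right (hb : SkewCommute R a b) (hc : SkewCommute R a c) :
    SkewCommute R a (b * c) := by
  obtain ⟨u, hu⟩ := hb
  obtain ⟨v, hv⟩ := hc
  refine ⟨u * v, ?_⟩
  rw [← mul_assoc, hu, smul_mul_assoc, mul_assoc, hv, mul_smul_comm, smul_smul, mul_assoc]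

theorem mul_left (ha : SkewCommute R a c) (hb : SkewCommute R b c) :
    SkewCommute R (a * b) c :=
  (ha.symm.mul_right hb.symm).symm

theorem pow_right (h : SkewCommute R a b) (m : ℕ) : SkewCommute R a (b ^ m) := by
  induction m with
  | zero => simpa using one_right a
  | succ m ih => rw [pow_succ]; exact ih.mul_right h

theorem pow_left (h : SkewCommute R a b) (m : ℕ) : SkewCommute R (a ^ m) b :=
  (h.symm.pow_right m).symm

theorem list_prod_right {L : List A} (h : ∀ b ∈ L, SkewCommute R a b) :
    SkewCommute R a L.prod := by
  induction L with
  | nil => exact one_right a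
  | cons b L ih =>
    rw [List.prod_cons]
    exact (h b List.mem_cons_self).mul_right (ih fun c hc => h c (List.mem_cons_of_mem b hc))

end SkewCommute

section xpow

variable {A : Type*} [Ring A] {n : ℕ}

theorem xpow_zero (x : Fin n → A) : xpow x 0 = 1 := by
  simp [xpow]

theorem xpow_eq_zero {x : Fin n → A} {ℓ : ℕ} (hx : ∀ i, x i ^ ℓ = 0) {γ : Fin n → ℕ}
    {j : Fin n} (hj : ℓ ≤ γ j) : xpow x γ = 0 :=
  List.prod_eq_zero (List.mem_map.mpr ⟨j, List.mem_finRange j, pow_eq_zero_of_le hj (hx j)⟩)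

theorem map_xpow {B F : Type*} [Semiring B] [FunLike F A B] [MonoidWithZeroHomClass F A B]
    (f : F) {x : Fin n → A} (hx : ∀ i, f (x i) = 0) (γ : Fin n → ℕ) :
    f (xpow x γ) = if ∀ i, γ i = 0 then 1 else 0 := by
  rw [xpow, map_list_prod, List.map_map]
  split_ifs with hγ
  · simp [hγ, Function.comp_def]
  · obtain ⟨j, hj⟩ := not_forall.mp hγ
    exact List.prod_eq_zero
      (List.mem_map.mpr ⟨j, List.mem_finRange j, by simp [hx, zero_pow hj]⟩)

variable {R : Type*} [CommSemiring R] [Algebra R A]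

theorem SkewCommute.xpow_right {a : A} {x : Fin n → A} (h : ∀ i, SkewCommute R a (x i))
    (γ : Fin n → ℕ) : SkewCommute R a (xpow x γ) :=
  SkewCommute.list_prod_right fun _ hb => by
    obtain ⟨i, -, rfl⟩ := List.mem_map.mp hb
    exact (h i).pow_right _

theorem exists_x_mul_xpow {x : Fin n → A} (hx : ∀ i j, SkewCommute R (x i) (x j))
    (γ : Fin n → ℕ) (j : Fin n) :
    ∃ u : Rˣ, x j * xpow x γ = u • xpow x (Function.update γ j (γ j + 1)) := by
  obtain ⟨l₁, l₂, hl⟩ := List.mem_iff_append.mp (List.mem_finRange j)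
  have hnd := hl ▸ List.nodup_finRange n
  rw [List.nodup_middle, List.nodup_cons, List.mem_append, not_or] at hnd
  have hmap : ∀ l : List (Fin n), j ∉ l →
      l.map (fun i => x i ^ Function.update γ j (γ j + 1) i) = l.map (fun i => x i ^ γ i) :=
    fun l hj => List.map_congr_left fun i hi => by
      rw [Function.update_of_ne (ne_of_mem_of_not_mem hi hj)]
  obtain ⟨u, hu⟩ := SkewCommute.list_prod_right (R := R) (a := x j)
    (L := l₁.map fun i => x i ^ γ i) fun _ hb => by
      obtain ⟨i, -, rfl⟩ := List.mem_map.mp hb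
      exact (hx j i).pow_right _
  refine ⟨u, ?_⟩
  simp only [xpow, hl, List.map_append, List.map_cons, List.prod_append, List.prod_cons,
    hmap _ hnd.1.1, hmap _ hnd.1.2, Function.update_self]
  rw [← mul_assoc, hu, smul_mul_assoc, mul_assoc, ← mul_assoc (x j), ← pow_succ']

theorem exists_xpow_eq_x_mul {x : Fin n → A} (hx : ∀ i j, SkewCommute R (x i) (x j))
    {γ : Fin n → ℕ} {j : Fin n} (hj : γ j ≠ 0) :
    ∃ u : Rˣ, xpow x γ = u • (x j * xpow x (Function.update γ j (γ j - 1))) := by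
  obtain ⟨u, hu⟩ := exists_x_mul_xpow hx (Function.update γ j (γ j - 1)) j
  rw [Function.update_idem, Function.update_self, Nat.sub_add_cancel (Nat.pos_of_ne_zero hj),
    Function.update_eq_self] at hu
  exact ⟨u⁻¹, eq_inv_smul_iff.mpr hu.symm⟩

end xpow

theorem natCast_eq_sum_nsmul_epsZ {n : ℕ} (c : Fin n → ℕ) :
    (fun i => (c i : ℤ)) = ∑ i, c i • epsZ i := by
  ext j
  simp [Finset.sum_apply, epsZ]

theorem natCast_induction_epsZ {n : ℕ} {P : (Fin n → ℤ) → Prop} (zero : P 0)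
    (add : ∀ a b, P a → P b → P (a + b)) (eps : ∀ i, P (epsZ i)) (c : Fin n → ℕ) :
    P fun i => (c i : ℤ) := by
  rw [natCast_eq_sum_nsmul_epsZ]
  refine Finset.sum_induction _ P add zero fun i _ => ?_
  induction c i with
  | zero => rwa [zero_nsmul]
  | succ m ih => rw [succ_nsmul]; exact add _ _ ih (eps i)

-- `kappa q α γ β` is the paper's `κ(α)(x^γ K(β))`.
def kappa {M : Type*} [MonoidWithZero M] (q : M) {n ℓ : ℕ} (α γ β : Fin n → Fin ℓ) : M :=
  if ∀ i, (γ i : ℕ) = 0 then q ^ (∑ i, (α i : ℕ) * (β i : ℕ)) else 0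

theorem kappa_injective {M : Type*} [CommMonoidWithZero M] {q : M} {n ℓ : ℕ}
    (hq : IsPrimitiveRoot q ℓ) (hℓ : 1 < ℓ) :
    Function.Injective (kappa q : (Fin n → Fin ℓ) → _) := by
  intro α α' h
  ext i
  let δ : Fin n → Fin ℓ := fun j => if j = i then ⟨1, hℓ⟩ else ⟨0, by omega⟩
  have hδ (α : Fin n → Fin ℓ) : kappa q α (fun _ => ⟨0, by omega⟩) δ = q ^ (α i : ℕ) := by
    simp [kappa, δ, apply_ite]
  exact hq.pow_inj (α i).isLt (α' i).isLt ((hδ α).symm.trans (congr_fun₂ h _ δ ▸ hδ α'))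

noncomputable def kappaLinear {k A : Type*} [CommSemiring k] [AddCommMonoid A] [Module k A]
    {n ℓ : ℕ} (b : Module.Basis ((Fin n → Fin ℓ) × (Fin n → Fin ℓ)) k A) (q : k)
    (α : Fin n → Fin ℓ) : A →ₗ[k] k :=
  b.constr k fun p => kappa q α p.1 p.2

namespace TaftPresentation

variable {k : Type*} [Field k] {A : Type*} [Ring A] [HopfAlgebra k A]
  {n ℓ : ℕ} {q t : k} (T : TaftPresentation k A n ℓ q t)

def KHom : Multiplicative (Fin n → ℤ) →* A where
  toFun c := T.K c.toAdd
  map_one' := T.K_zero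
  map_mul' a b := (T.K_add a b).symm

theorem K_nsmul (m : ℕ) (c : Fin n → ℤ) : T.K (m • c) = T.K c ^ m :=
  map_pow T.KHom (Multiplicative.ofAdd c) m

theorem isUnit_K (c : Fin n → ℤ) : IsUnit (T.K c) :=
  ⟨⟨T.K c, T.K (-c), by rw [T.K_add, add_neg_cancel, T.K_zero],
    by rw [T.K_add, neg_add_cancel, T.K_zero]⟩, rfl⟩

theorem K_ell_nsmul_natCast (c : Fin n → ℕ) : T.K (ℓ • fun i => (c i : ℤ)) = 1 :=
  natCast_induction_epsZ (P := fun c => T.K (ℓ • c) = 1) (by rw [smul_zero, T.K_zero])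
    (fun a b ha hb => by rw [smul_add, ← T.K_add, ha, hb, one_mul])
    (fun i => by rw [K_nsmul, T.K_ell]) c

theorem K_natCast_mod (c : Fin n → ℕ) :
    T.K (fun i => ((c i % ℓ : ℕ) : ℤ)) = T.K (fun i => (c i : ℤ)) := by
  have hc : (fun i => (c i : ℤ))
      = (fun i => ((c i % ℓ : ℕ) : ℤ)) + ℓ • fun i => ((c i / ℓ : ℕ) : ℤ) := by
    ext i
    rw [Pi.add_apply, Pi.smul_apply, nsmul_eq_mul]
    exact_mod_cast (Nat.mod_add_div (c i) ℓ).symm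
  rw [hc, ← T.K_add, K_ell_nsmul_natCast, mul_one]

theorem skewCommute_x_x (ht : t ≠ 0) (i j : Fin n) : SkewCommute k (T.x i) (T.x j) :=
  ⟨Units.mk0 _ (zpow_ne_zero _ ht), T.x_x i j⟩

theorem skewCommute_K_epsZ_x (hq : q ≠ 0) (ht : t ≠ 0) (i j : Fin n) :
    SkewCommute k (T.K (epsZ i)) (T.x j) :=
  ⟨Units.mk0 _ (mul_ne_zero (zpow_ne_zero _ ht) (by split_ifs <;> simp [hq])), T.K_x i j⟩

theorem skewCommute_K_natCast_xpow (hq : q ≠ 0) (ht : t ≠ 0) (c γ : Fin n → ℕ) :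
    SkewCommute k (T.K fun i => (c i : ℤ)) (xpow T.x γ) :=
  SkewCommute.xpow_right (fun j => natCast_induction_epsZ
    (P := fun c => SkewCommute k (T.K c) (T.x j)) (T.K_zero ▸ .one_left _)
    (fun a b ha hb => T.K_add a b ▸ ha.mul_left hb)
    (fun i => T.skewCommute_K_epsZ_x hq ht i j) c) γ

theorem map_x_eq_zero (hq : q ≠ 1) (χ : A →ₐ[k] k) (i : Fin n) : χ (T.x i) = 0 := by
  have h := congrArg χ (T.K_x i i)
  simp only [map_mul, map_smul, theta, sub_self, zpow_zero, if_true, one_mul, smul_eq_mul] at h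
  have hK : χ (T.K (epsZ i)) ≠ 0 := ((T.isUnit_K _).map χ).ne_zero
  have h' : ((1 - q) * χ (T.K (epsZ i))) * χ (T.x i) = 0 := by linear_combination h
  simpa [sub_eq_zero, Ne.symm hq, hK] using h'

theorem map_K_natCast (χ : A →ₐ[k] k) {a : Fin n → ℕ}
    (ha : ∀ i, χ (T.K (epsZ i)) = q ^ a i) (c : Fin n → ℕ) :
    χ (T.K fun i => (c i : ℤ)) = q ^ (∑ i, a i * c i) := by
  calc χ (T.K fun i => (c i : ℤ))
      = ((χ : A →* k).comp T.KHom) (Multiplicative.ofAdd (∑ i, c i • epsZ i)) := by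
        rw [← natCast_eq_sum_nsmul_epsZ]; rfl
    _ = ∏ i, χ (T.K (epsZ i)) ^ c i := by
        rw [ofAdd_sum, map_prod]
        simp only [ofAdd_nsmul, map_pow]
        rfl
    _ = q ^ (∑ i, a i * c i) := by
        simp only [ha, ← pow_mul, Finset.prod_pow_eq_pow_sum]

theorem exists_kappa_of_algHom (hq : IsPrimitiveRoot q ℓ) (hℓ : 1 < ℓ) (χ : A →ₐ[k] k) :
    ∃ α : Fin n → Fin ℓ, ∀ γ β, χ (T.mono γ β) = kappa q α γ β := by
  have : NeZero ℓ := ⟨by omega⟩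
  choose a haℓ ha using fun i => hq.eq_pow_of_pow_eq_one (ξ := χ (T.K (epsZ i)))
    (by rw [← map_pow, T.K_ell, map_one])
  refine ⟨fun i => ⟨a i, haℓ i⟩, fun γ β => ?_⟩
  rw [mono, map_mul, map_xpow χ (T.map_x_eq_zero (hq.ne_one hℓ) χ),
    T.map_K_natCast χ (fun i => (ha i).symm), kappa]
  split_ifs <;> simp

section kappaLinear

variable {T} {b : Module.Basis ((Fin n → Fin ℓ) × (Fin n → Fin ℓ)) k A}
  (hb : ∀ p, b p = T.mono p.1 p.2) (α : Fin n → Fin ℓ)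
include hb

theorem kappaLinear_mono (γ β : Fin n → Fin ℓ) :
    kappaLinear b q α (T.mono γ β) = kappa q α γ β := by
  rw [← hb (γ, β)]
  exact b.constr_basis k _ _

theorem kappaLinear_x_mul (ht : t ≠ 0) (j : Fin n) (a : A) :
    kappaLinear b q α (T.x j * a) = 0 := by
  suffices kappaLinear b q α ∘ₗ LinearMap.mulLeft k (T.x j) = 0 from LinearMap.congr_fun this a
  refine b.ext fun ⟨γ, β⟩ => ?_
  obtain ⟨u, hu⟩ := exists_x_mul_xpow (T.skewCommute_x_x ht) (fun i => (γ i : ℕ)) j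
  simp only [LinearMap.comp_apply, LinearMap.mulLeft_apply, LinearMap.zero_apply, hb, mono,
    ← mul_assoc, hu, smul_mul_assoc, Units.smul_def, map_smul]
  by_cases hj : (γ j : ℕ) + 1 < ℓ
  · have hγ : Function.update (fun i => (γ i : ℕ)) j ((γ j : ℕ) + 1)
        = fun i => (Function.update γ j ⟨_, hj⟩ i : ℕ) :=
      (Function.comp_update Fin.val γ j ⟨(γ j : ℕ) + 1, hj⟩).symm
    rw [hγ, ← mono, kappaLinear_mono hb, kappa, if_neg, smul_zero]
    exact fun h => by simpa using h j
  · rw [xpow_eq_zero T.x_ell (j := j) (by simp; omega), zero_mul, map_zero, smul_zero]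

theorem kappaLinear_xpow_mul (ht : t ≠ 0) {γ : Fin n → ℕ} (hγ : ¬∀ i, γ i = 0) (a : A) :
    kappaLinear b q α (xpow T.x γ * a) = 0 := by
  obtain ⟨j, hj⟩ := not_forall.mp hγ
  obtain ⟨u, hu⟩ := exists_xpow_eq_x_mul (T.skewCommute_x_x ht) hj
  rw [hu, smul_mul_assoc, mul_assoc, Units.smul_def, map_smul, kappaLinear_x_mul hb α ht,
    smul_zero]

theorem kappaLinear_K_mul (hq : q ^ ℓ = 1) (hq0 : q ≠ 0) (ht : t ≠ 0) (β : Fin n → Fin ℓ)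
    (a : A) : kappaLinear b q α (T.K (fun i => ((β i : ℕ) : ℤ)) * a)
      = q ^ (∑ i, (α i : ℕ) * (β i : ℕ)) * kappaLinear b q α a := by
  suffices kappaLinear b q α ∘ₗ LinearMap.mulLeft k (T.K fun i => ((β i : ℕ) : ℤ))
      = q ^ (∑ i, (α i : ℕ) * (β i : ℕ)) • kappaLinear b q α from
    LinearMap.congr_fun this a
  refine b.ext fun ⟨γ, β'⟩ => ?_
  simp only [LinearMap.comp_apply, LinearMap.mulLeft_apply, LinearMap.smul_apply, smul_eq_mul,
    hb, kappaLinear_mono hb]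
  by_cases hγ : ∀ i, (γ i : ℕ) = 0
  · have hmul : T.K (fun i => ((β i : ℕ) : ℤ)) * T.mono γ β'
        = T.mono γ fun i => ⟨(β i + β' i) % ℓ, Nat.mod_lt _ (β i).pos⟩ := by
      rw [mono, mono, show (fun i => (γ i : ℕ)) = 0 from funext hγ, xpow_zero, one_mul, one_mul,
        T.K_add, T.K_natCast_mod (fun i => β i + β' i)]
      simp only [Nat.cast_add]
      rfl
    rw [hmul, kappaLinear_mono hb, kappa, kappa, if_pos hγ, if_pos hγ, ← pow_add,
      ← Finset.sum_add_distrib, ← Finset.prod_pow_eq_pow_sum, ← Finset.prod_pow_eq_pow_sum]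
    refine Finset.prod_congr rfl fun i _ => ?_
    rw [← mul_add, mul_comm, pow_mul, mul_comm, pow_mul, ← pow_eq_pow_mod _ hq]
  · obtain ⟨u, hu⟩ := T.skewCommute_K_natCast_xpow hq0 ht (fun i => β i) (fun i => γ i)
    rw [kappa, if_neg hγ, mul_zero, mono, ← mul_assoc, hu, smul_mul_assoc, mul_assoc,
      Units.smul_def, map_smul, kappaLinear_xpow_mul hb α ht hγ, smul_zero]

theorem kappaLinear_mono_mul (hq : q ^ ℓ = 1) (hq0 : q ≠ 0) (ht : t ≠ 0)
    (γ β : Fin n → Fin ℓ) (a : A) :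
    kappaLinear b q α (T.mono γ β * a) = kappa q α γ β * kappaLinear b q α a := by
  rw [mono, mul_assoc, kappa]
  split_ifs with hγ
  · rw [show (fun i => (γ i : ℕ)) = 0 from funext hγ, xpow_zero, one_mul,
      kappaLinear_K_mul hb α hq hq0 ht]
  · rw [kappaLinear_xpow_mul hb α ht hγ, zero_mul]

theorem kappaLinear_mul (hq : q ^ ℓ = 1) (hq0 : q ≠ 0) (ht : t ≠ 0) (a a' : A) :
    kappaLinear b q α (a * a') = kappaLinear b q α a * kappaLinear b q α a' := by
  suffices kappaLinear b q α ∘ₗ LinearMap.mulRight k a'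
      = kappaLinear b q α a' • kappaLinear b q α
    by simpa [mul_comm] using LinearMap.congr_fun this a
  refine b.ext fun ⟨γ, β⟩ => ?_
  simp [hb, kappaLinear_mono_mul hb α hq hq0 ht, kappaLinear_mono hb, mul_comm]

theorem kappaLinear_one [NeZero ℓ] : kappaLinear b q α 1 = 1 := by
  have h1 : (1 : A) = T.mono 0 0 := by simp [mono, T.K_zero, ← Pi.zero_def, xpow_zero]
  simp [h1, kappaLinear_mono hb, kappa]

end kappaLinear

theorem exists_algHom_mono_eq_kappa [NeZero ℓ] (hq : q ^ ℓ = 1) (ht : t ≠ 0)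
    {b : Module.Basis ((Fin n → Fin ℓ) × (Fin n → Fin ℓ)) k A}
    (hb : ∀ p, b p = T.mono p.1 p.2) (α : Fin n → Fin ℓ) :
    ∃ χ : A →ₐ[k] k, ∀ γ β, χ (T.mono γ β) = kappa q α γ β := by
  have hq0 : q ≠ 0 := by
    rintro rfl
    exact zero_ne_one ((zero_pow (NeZero.ne ℓ)).symm.trans hq)
  exact ⟨AlgHom.ofLinearMap (kappaLinear b q α) (kappaLinear_one hb α)
    (kappaLinear_mul hb α hq hq0 ht), kappaLinear_mono hb α⟩

end TaftPresentation

theorem stmt7_general {k : Type*} [Field k]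
    {A : Type*} [Ring A] [HopfAlgebra k A] {n ℓ : ℕ} {q : k}
    (hq : IsPrimitiveRoot q ℓ) (hℓ : 1 < ℓ)
    (T : TaftPresentation k A n ℓ q q)
    (b : Module.Basis ((Fin n → Fin ℓ) × (Fin n → Fin ℓ)) k A)
    (hb : ∀ p, b p = T.mono p.1 p.2) :
    (∀ χ : A →ₐ[k] k, ∃! α : Fin n → Fin ℓ, ∀ γ β : Fin n → Fin ℓ,
        χ (T.mono γ β)
          = if ∀ i, (γ i : ℕ) = 0 then q ^ (∑ i, (α i : ℕ) * (β i : ℕ)) else 0) ∧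
    (∀ α : Fin n → Fin ℓ, ∃ χ : A →ₐ[k] k, ∀ γ β : Fin n → Fin ℓ,
        χ (T.mono γ β)
          = if ∀ i, (γ i : ℕ) = 0 then q ^ (∑ i, (α i : ℕ) * (β i : ℕ)) else 0) := by
  have : NeZero ℓ := ⟨by omega⟩
  refine ⟨fun χ => ?_, T.exists_algHom_mono_eq_kappa hq.pow_eq_one (hq.ne_zero (by omega)) hb⟩
  obtain ⟨α, hα⟩ := T.exists_kappa_of_algHom hq hℓ χ
  exact ⟨α, hα, fun α' hα' =>
    kappa_injective hq hℓ (funext₂ fun γ β => (hα' γ β).symm.trans (hα γ β))⟩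

/-- the group-like elements of the dual Hopf algebra `𝒜̄_q(n)*`
(equivalently, the algebra homomorphisms `𝒜̄_q(n) → k`) are exactly the `κ(α)`,
`α ∈ {0,…,ℓ-1}^n`, where `κ(α)(x^γ K(β)) = δ_{γ,0} q^{⟨α,β⟩}`; they are in
bijection with `(ℤ/ℓℤ)^n`. -/
theorem stmt7 {k : Type*} [Field k] [CharZero k] [IsAlgClosed k]
    {A : Type*} [Ring A] [HopfAlgebra k A] {n ℓ : ℕ} {q : k}
    (hq : IsPrimitiveRoot q ℓ) (hℓ : 1 < ℓ)
    (T : TaftPresentation k A n ℓ q q)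
    (b : Module.Basis ((Fin n → Fin ℓ) × (Fin n → Fin ℓ)) k A)
    (hb : ∀ p, b p = T.mono p.1 p.2) :
    (∀ χ : A →ₐ[k] k, ∃! α : Fin n → Fin ℓ, ∀ γ β : Fin n → Fin ℓ,
        χ (T.mono γ β)
          = if ∀ i, (γ i : ℕ) = 0 then q ^ (∑ i, (α i : ℕ) * (β i : ℕ)) else 0) ∧
    (∀ α : Fin n → Fin ℓ, ∃ χ : A →ₐ[k] k, ∀ γ β : Fin n → Fin ℓ,
        χ (T.mono γ β)
          = if ∀ i, (γ i : ℕ) = 0 then q ^ (∑ i, (α i : ℕ) * (β i : ℕ)) else 0) :=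
  stmt7_general hq hℓ T b hb
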